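/- For d = 3 and p a probability vector sorted non-increasingly, the three tangent vectors t^{(n)} = (t_1^{(n)}, p_n, ..., p_n, t_d^{(n)}) with t_1^{(n)} = ∑_{i<n} p_i − (n−2)p_n and t_d^{(n)} = 1 − t_1^{(n)} − (d−2)p_n are each quasi-probability vectors summing to 1 that majorise p (when their entries are nonnegative), and each t^{(n)} agrees with p in exactly the n-th partial sum: ∑_{i=1}^n t_i^{(n)} = ∑_{i=1}^n p_i, while ∑_{i=1}^k t_i^{(n)} ≥ ∑_{i=1}^k p_i for all k. -/

import Mathlib

open Finset

/-- The sum of the `k` largest entries of `p` (as a supremum over subsets of size `k`). -/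
noncomputable def sumLargest {ι : Type*} [Fintype ι] (p : ι → ℝ) (k : ℕ) : ℝ :=
  sSup {x : ℝ | ∃ s : Finset ι, s.card = k ∧ ∑ i ∈ s, p i = x}

/-- `p` majorises `q`: for every `k`, the sum of the `k` largest entries of `p`
is at least the sum of the `k` largest entries of `q`. -/
def Majorizes {ι : Type*} [Fintype ι] (p q : ι → ℝ) : Prop :=
  ∀ k : ℕ, k ≤ Fintype.card ι → sumLargest q k ≤ sumLargest p k

/-- A probability vector: nonnegative entries summing to 1. -/
def IsProbVec {ι : Type*} [Fintype ι] (p : ι → ℝ) : Prop :=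
  (∀ i, 0 ≤ p i) ∧ ∑ i, p i = 1

/-! The `k`-th partial sum of `t⁽ⁿ⁾` is `∑_{i<n} pᵢ + (k - n) pₙ` for `0 < k < d`; since `p`
is sorted, this dominates `∑_{i<k} pᵢ` whether `k ≤ n` or `k > n`. For a sorted vector the
partial sums are the sums of the `k` largest entries, while for an arbitrary vector they are
at most those sums, so dominance of partial sums gives majorisation. -/

lemma sumLargest_bddAbove {ι : Type*} [Fintype ι] (p : ι → ℝ) (k : ℕ) :
    BddAbove {x : ℝ | ∃ s : Finset ι, s.card = k ∧ ∑ i ∈ s, p i = x} := by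
  classical
  refine (Set.finite_range fun s : Finset ι => ∑ i ∈ s, p i).subset ?_ |>.bddAbove
  rintro x ⟨s, -, rfl⟩
  exact ⟨s, rfl⟩

lemma sum_le_sumLargest {ι : Type*} [Fintype ι] (p : ι → ℝ) (s : Finset ι) :
    ∑ i ∈ s, p i ≤ sumLargest p #s :=
  le_csSup (sumLargest_bddAbove p _) ⟨s, rfl, rfl⟩

lemma sumLargest_le {ι : Type*} [Fintype ι] {p : ι → ℝ} {k : ℕ} {c : ℝ}
    (hk : k ≤ Fintype.card ι) (h : ∀ s : Finset ι, #s = k → ∑ i ∈ s, p i ≤ c) :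
    sumLargest p k ≤ c := by
  obtain ⟨s, -, hs⟩ := exists_subset_card_eq (s := (univ : Finset ι)) (by simpa using hk)
  exact csSup_le ⟨_, s, hs, rfl⟩ (by rintro x ⟨s, hsk, rfl⟩; exact h s hsk)

theorem Antitone.sum_le_sum_filter_val_lt {n : ℕ} {p : Fin n → ℝ} (hp : Antitone p)
    (s : Finset (Fin n)) :
    ∑ i ∈ s, p i ≤ ∑ i ∈ univ.filter (fun i : Fin n => (i : ℕ) < #s), p i := by
  obtain rfl | hs := s.eq_empty_or_nonempty
  · simp
  set I := univ.filter (fun i : Fin n => (i : ℕ) < #s)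
  have hsn : #s ≤ n := by simpa using card_le_univ s
  have hpos : 0 < #s := hs.card_pos
  -- compare both sums with the threshold `c = p (#s - 1)`, which separates `I` from `Iᶜ`
  set c := p ⟨#s - 1, by omega⟩
  have hcard : #I = #s := by simp [I, Fin.card_filter_val_lt, hsn]
  have hI : ∀ i ∈ I, c ≤ p i := fun i hi =>
    hp (Fin.le_def.2 (by simp [I] at hi; simp; omega))
  have hIc : ∀ i ∉ I, p i ≤ c := fun i hi =>
    hp (Fin.le_def.2 (by simp [I] at hi; simp; omega))
  have key : ∑ i ∈ s, (p i - c) ≤ ∑ i ∈ I, (p i - c) := calc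
    ∑ i ∈ s, (p i - c) ≤ ∑ i ∈ s ∩ I, (p i - c) := by
      rw [← sum_inter_add_sum_sdiff s I]
      refine add_le_of_nonpos_right (sum_nonpos fun i hi => ?_)
      exact sub_nonpos.2 (hIc i (mem_sdiff.1 hi).2)
    _ ≤ ∑ i ∈ I, (p i - c) :=
      sum_le_sum_of_subset_of_nonneg inter_subset_right fun i hi _ => sub_nonneg.2 (hI i hi)
  simpa [sum_sub_distrib, hcard] using key

theorem majorizes_of_antitone_of_sum_filter_val_lt_le {n : ℕ} {p t : Fin n → ℝ}
    (hp : Antitone p)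
    (h : ∀ k ≤ n, ∑ i ∈ univ.filter (fun i : Fin n => (i : ℕ) < k), p i ≤
      ∑ i ∈ univ.filter (fun i : Fin n => (i : ℕ) < k), t i) :
    Majorizes t p := by
  intro k hk
  have hkn : k ≤ n := by simpa using hk
  set I := univ.filter (fun i : Fin n => (i : ℕ) < k)
  refine sumLargest_le hk fun s hs => ?_
  calc ∑ i ∈ s, p i ≤ ∑ i ∈ I, p i := by subst hs; exact hp.sum_le_sum_filter_val_lt s
    _ ≤ ∑ i ∈ I, t i := h k hkn
    _ ≤ sumLargest t k := by simpa [I, Fin.card_filter_val_lt, hkn] using sum_le_sumLargest t I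

/-- For `d = 3` and a non-increasingly sorted probability vector `p`, the tangent
vectors `t⁽ⁿ⁾` (for `n = m+1`, `m : Fin 3`) sum to 1, agree with `p` in the `n`-th
partial sum, dominate all partial sums of `p`, and majorise `p` whenever their
entries are nonnegative. -/
theorem tangent_vectors_d3 (p : Fin 3 → ℝ) (hp : IsProbVec p) (hsorted : Antitone p)
    (m : Fin 3) :
    let t : Fin 3 → ℝ :=
      ![(∑ i ∈ Finset.univ.filter fun i => i < m, p i) - ((m : ℕ) - 1 : ℝ) * p m,
        p m,
        1 - ((∑ i ∈ Finset.univ.filter fun i => i < m, p i) - ((m : ℕ) - 1 : ℝ) * p m) - p m]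
    (∑ i, t i = 1) ∧
    (∑ i ∈ Finset.univ.filter fun i : Fin 3 => i ≤ m, t i =
      ∑ i ∈ Finset.univ.filter fun i : Fin 3 => i ≤ m, p i) ∧
    (∀ k : ℕ, k ≤ 3 →
      ∑ i ∈ Finset.univ.filter fun i : Fin 3 => (i : ℕ) < k, p i ≤
        ∑ i ∈ Finset.univ.filter fun i : Fin 3 => (i : ℕ) < k, t i) ∧
    ((∀ i, 0 ≤ t i) → Majorizes t p) := by
  intro t
  have h01 : p 1 ≤ p 0 := hsorted (by decide)
  have h12 : p 2 ≤ p 1 := hsorted (by decide)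
  have hsum : p 0 + p 1 + p 2 = 1 := by simpa [Fin.sum_univ_three] using hp.2
  have hprefix : ∀ k ≤ 3, ∑ i ∈ univ.filter (fun i : Fin 3 => (i : ℕ) < k), p i ≤
      ∑ i ∈ univ.filter (fun i : Fin 3 => (i : ℕ) < k), t i := by
    intro k hk
    interval_cases k <;> fin_cases m <;> simp [t, sum_filter, Fin.sum_univ_three] <;> linarith
  refine ⟨?_, ?_, hprefix,
    fun _ => majorizes_of_antitone_of_sum_filter_val_lt_le hsorted hprefix⟩
  · simp [t, Fin.sum_univ_three]
  · fin_cases m <;> simp [t, sum_filter, Fin.sum_univ_three, hsum]
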